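/- Assume a < b and 2r ≤ a². If 𝒮 and 𝒫 are tangent at some point, then the characteristic polynomial f has a real root of multiplicity at least 2. -/

import Mathlib

open Matrix Polynomial

/-!
At a point of tangency X = (x, y, z, 1) the covectors PX and SX are proportional, and comparing
third coordinates shows (λ₀P + S)X = 0 for λ₀ = 2(z - z_c). Together with XᵗPX = 0 this forces λ₀
to be a double root of f(λ) = det(λP + S). Concretely, with c = x_c² + y_c² + z_c² - r²,
  f(λ) = (1 + λ/a²)(1 + λ/b²)(c - (λ/2 + z_c)²) - (1 + λ/a²) y_c² - (1 + λ/b²) x_c²,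
and tangency gives x_c = (1 + λ₀/a²) x, y_c = (1 + λ₀/b²) y and c = z² + x_c x + y_c y, under
which f(λ₀) and f'(λ₀) vanish identically. Finally f ≠ 0 since f(0) = det S = -r².
-/

/-- The 4×4 matrix of the elliptic paraboloid x²/a² + y²/b² - z = 0. -/
noncomputable def Pmat (a b : ℝ) : Matrix (Fin 4) (Fin 4) ℝ :=
  !![1/a^2, 0, 0, 0;
     0, 1/b^2, 0, 0;
     0, 0, 0, -(1/2 : ℝ);
     0, 0, -(1/2 : ℝ), 0]

/-- The 4×4 matrix of the sphere (x-x_c)² + (y-y_c)² + (z-z_c)² = r². -/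
noncomputable def Smat (xc yc zc r : ℝ) : Matrix (Fin 4) (Fin 4) ℝ :=
  !![1, 0, 0, -xc;
     0, 1, 0, -yc;
     0, 0, 1, -zc;
     -xc, -yc, -zc, xc^2 + yc^2 + zc^2 - r^2]

/-- The characteristic polynomial f(λ) = det(λP + S), as a real polynomial in λ. -/
noncomputable def charPoly (a b xc yc zc r : ℝ) : Polynomial ℝ :=
  Matrix.det ((X : Polynomial ℝ) • (Pmat a b).map C + (Smat xc yc zc r).map C)

/-- The sphere and the paraboloid are tangent at the point (x,y,z):
with X = (x,y,z,1)ᵗ one has XᵗPX = 0, XᵗSX = 0 and for every Y,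
YᵗPX = 0 iff YᵗSX = 0 (same tangent plane). -/
def TangentAt (a b xc yc zc r x y z : ℝ) : Prop :=
  ![x, y, z, 1] ⬝ᵥ (Pmat a b).mulVec ![x, y, z, 1] = 0 ∧
  ![x, y, z, 1] ⬝ᵥ (Smat xc yc zc r).mulVec ![x, y, z, 1] = 0 ∧
  ∀ Y : Fin 4 → ℝ,
    Y ⬝ᵥ (Pmat a b).mulVec ![x, y, z, 1] = 0 ↔
    Y ⬝ᵥ (Smat xc yc zc r).mulVec ![x, y, z, 1] = 0

lemma eval_det_X_smul_add {n R : Type*} [Fintype n] [DecidableEq n] [CommRing R]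
    (P S : Matrix n n R) (t : R) :
    ((X : R[X]) • P.map C + S.map C).det.eval t = (t • P + S).det := by
  rw [← coe_evalRingHom, RingHom.map_det]
  congr 1
  ext i j
  simp only [RingHom.mapMatrix_apply, Matrix.map_apply, Matrix.add_apply, Matrix.smul_apply,
    smul_eq_mul, coe_evalRingHom, eval_add, eval_mul, eval_X, eval_C]

lemma eval_charPoly (a b xc yc zc r t : ℝ) :
    (charPoly a b xc yc zc r).eval t =
      (t / a^2 + 1) * (t / b^2 + 1) * (xc^2 + yc^2 + zc^2 - r^2 - (t / 2 + zc)^2)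
        - (t / a^2 + 1) * yc^2 - (t / b^2 + 1) * xc^2 := by
  rw [charPoly, eval_det_X_smul_add, Matrix.det_succ_row_zero]
  simp only [Pmat, Smat, Fin.sum_univ_succ, det_fin_three, submatrix, Fin.succAbove,
    Matrix.add_apply, Matrix.smul_apply, of_apply, cons_val, Fin.reduceCastSucc, Fin.reduceSucc,
    Fin.reduceLT, ↓reduceIte, Fin.coe_ofNat_eq_mod]
  ring

lemma eval_charPoly_zero (a b xc yc zc r : ℝ) : (charPoly a b xc yc zc r).eval 0 = -r^2 := by
  rw [eval_charPoly]
  ring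

lemma charPoly_eq (a b xc yc zc r : ℝ) :
    charPoly a b xc yc zc r =
      (C (1 / a^2) * X + 1) * (C (1 / b^2) * X + 1) *
          (C (xc^2 + yc^2 + zc^2 - r^2) - (C (1 / 2) * X + C zc)^2)
        - (C (1 / a^2) * X + 1) * C (yc^2) - (C (1 / b^2) * X + 1) * C (xc^2) := by
  refine Polynomial.funext fun t ↦ ?_
  simp only [eval_charPoly, eval_sub, eval_mul, eval_add, eval_pow, eval_C, eval_X, eval_one]
  ring

lemma eval_derivative_charPoly (a b xc yc zc r t : ℝ) :
    (derivative (charPoly a b xc yc zc r)).eval t =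
      (1 / a^2 * (t / b^2 + 1) + (t / a^2 + 1) * (1 / b^2))
          * (xc^2 + yc^2 + zc^2 - r^2 - (t / 2 + zc)^2)
        - (t / a^2 + 1) * (t / b^2 + 1) * (t / 2 + zc)
        - yc^2 / a^2 - xc^2 / b^2 := by
  rw [charPoly_eq]
  simp only [derivative_sub, derivative_mul, derivative_add, derivative_C, derivative_X,
    derivative_one, derivative_sq, eval_sub, eval_mul, eval_add, eval_pow, eval_C, eval_X,
    eval_one, eval_zero]
  ring

lemma dotProduct_Pmat_mulVec (a b x y z : ℝ) (Y : Fin 4 → ℝ) :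
    Y ⬝ᵥ (Pmat a b).mulVec ![x, y, z, 1] =
      Y 0 * (x / a^2) + Y 1 * (y / b^2) - Y 2 / 2 - Y 3 * (z / 2) := by
  simp only [Pmat, dotProduct, mulVec, Fin.sum_univ_four, of_apply, cons_val', cons_val_fin_one,
    cons_val_zero, cons_val_one, cons_val]
  ring

lemma dotProduct_Smat_mulVec (xc yc zc r x y z : ℝ) (Y : Fin 4 → ℝ) :
    Y ⬝ᵥ (Smat xc yc zc r).mulVec ![x, y, z, 1] =
      Y 0 * (x - xc) + Y 1 * (y - yc) + Y 2 * (z - zc)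
        + Y 3 * (xc^2 + yc^2 + zc^2 - r^2 - xc * x - yc * y - zc * z) := by
  simp only [Smat, dotProduct, mulVec, Fin.sum_univ_four, of_apply, cons_val', cons_val_fin_one,
    cons_val_zero, cons_val_one, cons_val]
  ring

namespace TangentAt

variable {a b xc yc zc r x y z : ℝ}

lemma z_eq (h : TangentAt a b xc yc zc r x y z) : z = x^2 / a^2 + y^2 / b^2 := by
  have hP := h.1
  simp only [dotProduct_Pmat_mulVec, cons_val_zero, cons_val_one, cons_val] at hP
  linear_combination -hP

lemma dotProduct_Smat_eq_zero (h : TangentAt a b xc yc zc r x y z) (u v w s : ℝ)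
    (hP : u * (x / a^2) + v * (y / b^2) - w / 2 - s * (z / 2) = 0) :
    u * (x - xc) + v * (y - yc) + w * (z - zc)
      + s * (xc^2 + yc^2 + zc^2 - r^2 - xc * x - yc * y - zc * z) = 0 := by
  have hS := (h.2.2 ![u, v, w, s]).1
  simp only [dotProduct_Pmat_mulVec, dotProduct_Smat_mulVec, cons_val_zero, cons_val_one,
    cons_val] at hS
  exact hS hP

lemma xc_eq (h : TangentAt a b xc yc zc r x y z) : xc = (1 + 2 * (z - zc) / a^2) * x := by
  linear_combination -h.dotProduct_Smat_eq_zero 1 0 (2 * x / a^2) 0 (by ring)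

lemma yc_eq (h : TangentAt a b xc yc zc r x y z) : yc = (1 + 2 * (z - zc) / b^2) * y := by
  linear_combination -h.dotProduct_Smat_eq_zero 0 1 (2 * y / b^2) 0 (by ring)

lemma sphere_const_eq (h : TangentAt a b xc yc zc r x y z) :
    xc^2 + yc^2 + zc^2 - r^2 = z^2 + xc * x + yc * y := by
  linear_combination h.dotProduct_Smat_eq_zero 0 0 (-z) 1 (by ring)

lemma isRoot_charPoly (h : TangentAt a b xc yc zc r x y z) :
    (charPoly a b xc yc zc r).IsRoot (2 * (z - zc)) := by
  rw [IsRoot.def, eval_charPoly]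
  linear_combination (2 * (z - zc) / a^2 + 1) * (2 * (z - zc) / b^2 + 1) * h.sphere_const_eq
    - (2 * (z - zc) / b^2 + 1) * xc * h.xc_eq - (2 * (z - zc) / a^2 + 1) * yc * h.yc_eq

lemma isRoot_derivative_charPoly (h : TangentAt a b xc yc zc r x y z) :
    (derivative (charPoly a b xc yc zc r)).IsRoot (2 * (z - zc)) := by
  rw [IsRoot.def, eval_derivative_charPoly]
  linear_combination (1 / a^2 * (2 * (z - zc) / b^2 + 1) + (2 * (z - zc) / a^2 + 1) * (1 / b^2))
      * h.sphere_const_eq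
    + (1 / a^2 * (2 * (z - zc) / b^2 + 1) * x - 1 / b^2 * xc) * h.xc_eq
    + (1 / b^2 * (2 * (z - zc) / a^2 + 1) * y - 1 / a^2 * yc) * h.yc_eq
    - (2 * (z - zc) / a^2 + 1) * (2 * (z - zc) / b^2 + 1) * h.z_eq

end TangentAt

theorem tangent_implies_multiple_root_general (a b r xc yc zc : ℝ)
    (hr : 0 < r)
    (htan : ∃ x y z : ℝ, TangentAt a b xc yc zc r x y z) :
    ∃ l : ℝ, 2 ≤ rootMultiplicity l (charPoly a b xc yc zc r) := by
  obtain ⟨x, y, z, h⟩ := htan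
  have hf : charPoly a b xc yc zc r ≠ 0 := fun h0 ↦ by
    simpa [h0, hr.ne'] using eval_charPoly_zero a b xc yc zc r
  exact ⟨2 * (z - zc), (one_lt_rootMultiplicity_iff_isRoot hf).2
    ⟨h.isRoot_charPoly, h.isRoot_derivative_charPoly⟩⟩

/-- (a < b, smallness) if the sphere and the paraboloid are
tangent at some point, then f has a multiple real root. -/
theorem tangent_implies_multiple_root (a b r xc yc zc : ℝ)
    (ha : 0 < a) (hab : a < b) (hr : 0 < r) (hsmall : 2*r ≤ a^2)
    (htan : ∃ x y z : ℝ, TangentAt a b xc yc zc r x y z) :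
    ∃ l : ℝ, 2 ≤ rootMultiplicity l (charPoly a b xc yc zc r) :=
  tangent_implies_multiple_root_general a b r xc yc zc hr htan
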